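/- arXiv:1106.4339 — 2 statements merged into one kernel-verified Lean document; each statement's English description precedes it below -/
import Mathlib

section
/- If Bartnik data (Σ, γ, λH) induced on the coordinate sphere S_r embeds as a coordinate sphere in a Schwarzschild manifold of mass m', then m' = (r/2)((1 + m/(2r))² - λ²(1 - m/(2r))²): i.e., the simultaneous equations 4πr²(1+m/(2r))^4 = 4π(r')²(1+m'/(2r'))^4 and λH_r(m) = H_{r'}(m') (with H_s(μ) = (2/s)(1+μ/(2s))^{-2} - (2μ/s²)(1+μ/(2s))^{-3}) imply m' = (r/2)((1 + m/(2r))² - λ²(1 - m/(2r))²). -/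
open Real

/-- Mean curvature of the coordinate sphere of radius `s` in the Schwarzschild
metric of mass `μ`: `H_s(μ) = (2/s)(1+μ/(2s))⁻² - (2μ/s²)(1+μ/(2s))⁻³`. -/
noncomputable def schwarzMeanCurv (s μ : ℝ) : ℝ :=
  2 / s * ((1 + μ / (2 * s)) ^ 2)⁻¹ - 2 * μ / s ^ 2 * ((1 + μ / (2 * s)) ^ 3)⁻¹

lemma schwarzMeanCurv_eq (s μ : ℝ) (hs : s ≠ 0) (h : 2 * s + μ ≠ 0) :
    schwarzMeanCurv s μ = 2 * (1 - μ / (2 * s)) / (s * (1 + μ / (2 * s)) ^ 3) := by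
  unfold schwarzMeanCurv
  have h1 : 1 + μ / (2 * s) ≠ 0 := by
    intro hc
    apply h
    have : (2 * s) * (1 + μ / (2 * s)) = 2 * s + μ := by field_simp
    rw [hc, mul_zero] at this
    linarith
  field_simp
  ring

/-- Fix `m > 0`, `r > m/2` and `λ ∈ (0, λ₀)` with
`λ₀ = (1+m/(2r))/(1-m/(2r))`.  If the rescaled Bartnik data `(S_r, γ, λH)`
embeds as a coordinate sphere of radius `r' > m'/2` in a Schwarzschild manifold
of mass `m'`, i.e. the area-matching equation
`4πr²(1+m/(2r))⁴ = 4π(r')²(1+m'/(2r'))⁴` and the mean-curvature matching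
equation `λ H_r(m) = H_{r'}(m')` hold, then
`m' = (r/2)((1 + m/(2r))² - λ²(1 - m/(2r))²)`. -/
theorem stmt_7 (m r lam m' r' : ℝ) (hm : 0 < m) (hr : m / 2 < r)
    (hlam : 0 < lam) (hlam0 : lam < (1 + m / (2 * r)) / (1 - m / (2 * r)))
    (hr' : m' / 2 < r') (hr'pos : 0 < r')
    (harea : 4 * π * r ^ 2 * (1 + m / (2 * r)) ^ 4
      = 4 * π * r' ^ 2 * (1 + m' / (2 * r')) ^ 4)
    (hmean : lam * schwarzMeanCurv r m = schwarzMeanCurv r' m') :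
    m' = r / 2 * ((1 + m / (2 * r)) ^ 2 - lam ^ 2 * (1 - m / (2 * r)) ^ 2) := by
  have hrpos : 0 < r := by linarith
  set a : ℝ := 1 + m / (2 * r) with ha_def
  set b : ℝ := 1 - m / (2 * r) with hb_def
  set a' : ℝ := 1 + m' / (2 * r') with ha'_def
  set b' : ℝ := 1 - m' / (2 * r') with hb'_def
  have ha : 0 < a := by
    have : 0 < m / (2 * r) := by positivity
    rw [ha_def]; linarith
  have hb : 0 < b := by
    by_contra h
    push_neg at h
    have : a / b ≤ 0 := div_nonpos_of_nonneg_of_nonpos ha.le h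
    linarith
  have hane : a ≠ 0 := ne_of_gt ha
  have hrne : r ≠ 0 := ne_of_gt hrpos
  have hr'ne : r' ≠ 0 := ne_of_gt hr'pos
  -- area matching, with 4π cancelled
  have h1 : r ^ 2 * a ^ 4 = r' ^ 2 * a' ^ 4 :=
    mul_left_cancel₀ (show (4 * π : ℝ) ≠ 0 by positivity) (by linear_combination harea)
  have h2 : r * a ^ 2 = r' * a' ^ 2 := by
    have h3 : (r * a ^ 2 - r' * a' ^ 2) * (r * a ^ 2 + r' * a' ^ 2) = 0 := by
      linear_combination h1
    have hp1 : 0 < r * a ^ 2 := by positivity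
    have hp2 : 0 ≤ r' * a' ^ 2 := by positivity
    rcases mul_eq_zero.mp h3 with h | h
    · linarith
    · linarith
  have ha'ne : a' ≠ 0 := by
    intro h
    rw [h] at h2
    simp at h2
    rcases h2 with h | h
    · exact hrne h
    · exact hane h
  -- mean curvature in simplified form
  have HA : schwarzMeanCurv r m = 2 * b / (r * a ^ 3) := by
    rw [schwarzMeanCurv_eq r m hrne (by linarith), ← ha_def, ← hb_def]
  have hden' : 2 * r' + m' ≠ 0 := by
    intro h
    apply ha'ne
    have hmm : m' = -(2 * r') := by linarith
    rw [ha'_def, hmm]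
    field_simp
    ring
  have HB : schwarzMeanCurv r' m' = 2 * b' / (r' * a' ^ 3) := by
    rw [schwarzMeanCurv_eq r' m' hr'ne hden', ← ha'_def, ← hb'_def]
  rw [HA, HB] at hmean
  have h5 : lam * (2 * b) * (r' * a' ^ 3) = 2 * b' * (r * a ^ 3) := by
    rw [mul_div_assoc'] at hmean
    have := (div_eq_div_iff (by positivity) (by
      exact mul_ne_zero hr'ne (pow_ne_zero 3 ha'ne))).mp hmean
    linarith
  have E2 : lam * b * a' = b' * a := by
    apply mul_left_cancel₀ (show (2 * r' * a' ^ 2 : ℝ) ≠ 0 by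
      exact mul_ne_zero (mul_ne_zero two_ne_zero hr'ne) (pow_ne_zero 2 ha'ne))
    linear_combination h5 + 2 * b' * a * h2
  have hb'eq : b' = 2 - a' := by rw [hb'_def, ha'_def]; ring
  have habpos : 0 < a + lam * b := by positivity
  have ha'eq : a' = 2 * a / (a + lam * b) := by
    rw [eq_div_iff (ne_of_gt habpos)]
    rw [hb'eq] at E2
    linear_combination E2
  have hm'eq : m' = 2 * r' * (a' - 1) := by
    rw [ha'_def]
    field_simp
    ring
  have hr'eq : r' = r * a ^ 2 / a' ^ 2 := by
    rw [eq_div_iff (pow_ne_zero 2 ha'ne)]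
    linear_combination - h2
  rw [hm'eq, hr'eq, ha'eq]
  field_simp
  ring
end

section
/- Suppose Bartnik data of nonnegative type satisfies the Shi–Tam bound λ₀ ≤ ∫H₀/∫H and the Minkowski inequality (∫H₀)² ≥ 16π|Σ|. Then the quasi-local mass m(ℬ) = sqrt(|Σ|/(16π))(1 - 1/λ₀²) is bounded above by the Brown–York mass m_{BY}(ℬ) = (1/8π)∫(H₀ - H): m(ℬ) ≤ m_{BY}(ℬ). -/
open Real

/-- Suppose Bartnik data of nonnegative type (so `λ₀ ≥ 1`)
satisfies the Shi–Tam bound `λ₀ ≤ ∫H₀/∫H` and the Minkowski inequality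
`(∫H₀)² ≥ 16π|Σ|`.  Then the quasi-local mass
`m(ℬ) = √(|Σ|/(16π))(1 - 1/λ₀²)` is bounded above by the Brown–York mass
`m_BY(ℬ) = (1/8π)∫(H₀ - H)`.  Abstracted: `A = |Σ|_γ > 0`,
`a = ∫H dA_γ > 0`, `b = ∫H₀ dA_γ > 0`. -/
theorem stmt_15 (A a b lam₀ : ℝ) (hA : 0 < A) (ha : 0 < a) (hb : 0 < b)
    (hlam₀ : 1 ≤ lam₀) (hShiTam : lam₀ ≤ b / a)
    (hMinkowski : 16 * π * A ≤ b ^ 2) :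
    Real.sqrt (A / (16 * π)) * (1 - 1 / lam₀ ^ 2)
      ≤ (1 / (8 * π)) * (b - a) := by
  have hπ : (0:ℝ) < π := Real.pi_pos
  have hlam₀' : 0 < lam₀ := lt_of_lt_of_le one_pos hlam₀
  have hable : a * lam₀ ≤ b := by
    rw [le_div_iff₀ ha] at hShiTam; linarith [hShiTam]
  have hab : a ≤ b := by nlinarith
  have h1 : 1 - 1 / lam₀ ^ 2 ≤ 2 * (b - a) / b := by
    rw [le_div_iff₀ hb]
    have ht : (0:ℝ) ≤ 1 / lam₀ ^ 2 := by positivity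
    have e1 : (1 / lam₀ ^ 2) * lam₀ ^ 2 = 1 := by field_simp
    have hsq : (a * lam₀) ^ 2 ≤ b ^ 2 := by nlinarith [mul_pos ha hlam₀']
    have key : a ^ 2 ≤ (1 / lam₀ ^ 2) * b ^ 2 := by
      nlinarith [mul_le_mul_of_nonneg_left hsq ht]
    nlinarith [sq_nonneg (b - a), hb]
  have h1' : 0 ≤ 1 - 1 / lam₀ ^ 2 := by
    have : 1 / lam₀ ^ 2 ≤ 1 := by
      rw [div_le_one (by positivity)]; nlinarith
    linarith
  have h2 : Real.sqrt (A / (16 * π)) ≤ b / (16 * π) := by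
    have hle : A / (16 * π) ≤ (b / (16 * π)) ^ 2 := by
      rw [div_pow, div_le_div_iff₀ (by positivity) (by positivity)]
      nlinarith
    calc Real.sqrt (A / (16 * π)) ≤ Real.sqrt ((b / (16 * π)) ^ 2) :=
          Real.sqrt_le_sqrt hle
      _ = b / (16 * π) := Real.sqrt_sq (by positivity)
  have := mul_le_mul h2 h1 h1' (by positivity)
  calc Real.sqrt (A / (16 * π)) * (1 - 1 / lam₀ ^ 2)
      ≤ b / (16 * π) * (2 * (b - a) / b) := this
    _ = (1 / (8 * π)) * (b - a) := by field_simp; ring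
end
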